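/- arXiv:2307.16593 — 7 statements merged into one kernel-verified Lean document; each statement's English description precedes it below -/
import Mathlib

section
/- Let G be a finite connected graph with diameter D, let B ≥ 2D + 2, and let f : V → ℤ be edge-Lipschitz with f(V) ⊆ [−B, B). Then there exists c ∈ [0, B) such that no node p satisfies f(p) = c. -/
/-!
All values of an edge-Lipschitz `f` lie within `D` of the value at any fixed node `u`, so they
occupy at most `2D + 1` consecutive integers. If `0` is among them, they all lie below
`f u + D + 1 ≤ 2D + 1 < B`, which is then a free value in `[0, B)`; otherwise `0` itself is free.
-/

theorem Int.exists_mem_Ico_forall_abs_sub_le_ne (m : ℤ) (D : ℕ) (B : ℤ) (hB : 2 * D + 2 ≤ B) :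
    ∃ c ∈ Set.Ico 0 B, ∀ x : ℤ, |x - m| ≤ D → x ≠ c := by
  by_cases h0 : |0 - m| ≤ D
  · rw [abs_le] at h0
    refine ⟨m + D + 1, ⟨by omega, by omega⟩, fun x hx => ?_⟩
    rw [abs_le] at hx
    omega
  · exact ⟨0, ⟨le_rfl, by omega⟩, fun x hx hx0 => h0 (hx0 ▸ hx)⟩

namespace SimpleGraph

variable {V : Type*} {G : SimpleGraph V} {f : V → ℤ}

theorem Walk.abs_sub_le_length (hf : ∀ u v : V, G.Adj u v → |f u - f v| ≤ 1) {u v : V}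
    (w : G.Walk u v) : |f u - f v| ≤ w.length := by
  induction w with
  | nil => simp
  | @cons a b c hab w ih =>
    calc |f a - f c| ≤ |f a - f b| + |f b - f c| := abs_sub_le _ _ _
      _ ≤ 1 + w.length := add_le_add (hf a b hab) ih
      _ = (w.cons hab).length := by simp [add_comm]

theorem Reachable.abs_sub_le_dist (hf : ∀ u v : V, G.Adj u v → |f u - f v| ≤ 1) {u v : V}
    (huv : G.Reachable u v) : |f u - f v| ≤ G.dist u v := by
  obtain ⟨w, hw⟩ := huv.exists_walk_length_eq_dist
  exact hw ▸ w.abs_sub_le_length hf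

theorem Connected.abs_sub_le_diam [Finite V] (hG : G.Connected)
    (hf : ∀ u v : V, G.Adj u v → |f u - f v| ≤ 1) (u v : V) : |f u - f v| ≤ G.diam := by
  have : Nonempty V := hG.nonempty
  calc |f u - f v| ≤ G.dist u v := (hG u v).abs_sub_le_dist hf
    _ ≤ G.diam := by exact_mod_cast G.dist_le_diam (G.connected_iff_ediam_ne_top.mp hG)

end SimpleGraph

theorem stmt3_general {V : Type*} [Fintype V] (G : SimpleGraph V) (hG : G.Connected)
    (B : ℤ) (hB : B ≥ 2 * G.diam + 2)
    (f : V → ℤ) (hf : ∀ u v : V, G.Adj u v → |f u - f v| ≤ 1) :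
    ∃ c : ℤ, c ∈ Set.Ico 0 B ∧ ∀ p : V, f p ≠ c := by
  obtain ⟨u⟩ := hG.nonempty
  obtain ⟨c, hc, hmiss⟩ := Int.exists_mem_Ico_forall_abs_sub_le_ne (f u) G.diam B hB
  exact ⟨c, hc, fun p => hmiss (f p) (hG.abs_sub_le_diam hf p u)⟩

theorem stmt3 {V : Type*} [Fintype V] (G : SimpleGraph V) (hG : G.Connected)
    (B : ℤ) (hB : B ≥ 2 * G.diam + 2)
    (f : V → ℤ) (hf : ∀ u v : V, G.Adj u v → |f u - f v| ≤ 1)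
    (hrange : ∀ p : V, f p ∈ Set.Ico (-B) B) :
    ∃ c : ℤ, c ∈ Set.Ico 0 B ∧ ∀ p : V, f p ≠ c :=
  stmt3_general G hG B hB f hf
end

section
/- Consider a unison execution (cⁱ)_{i≥0} on a graph G. If |c⁰(p) − c⁰(q)| ≤ 1 for every edge {p,q}, then |cⁱ(p) − cⁱ(q)| ≤ 1 for every edge {p,q} and every i ≥ 0. -/
lemma abs_sub_le_one_of_guarded_increments {a b a' b' : ℤ} (hab : |a - b| ≤ 1)
    (ha : a' = a ∨ a' = a + 1) (hb : b' = b ∨ b' = b + 1)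
    (hga : a' = a + 1 → b = a ∨ b = a + 1) (hgb : b' = b + 1 → a = b ∨ a = b + 1) :
    |a' - b'| ≤ 1 := by
  rw [abs_le] at hab ⊢
  omega

theorem stmt7_general {V : Type*} (G : SimpleGraph V)
    (c : ℕ → V → ℤ)
    (hstep : ∀ i (p : V), c (i + 1) p = c i p ∨ c (i + 1) p = c i p + 1)
    (hguard : ∀ i (p : V), c (i + 1) p = c i p + 1 →
      ∀ q : V, G.Adj p q → c i q = c i p ∨ c i q = c i p + 1)
    (h0 : ∀ p q : V, G.Adj p q → |c 0 p - c 0 q| ≤ 1) :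
    ∀ i (p q : V), G.Adj p q → |c i p - c i q| ≤ 1 := by
  intro i
  induction i with
  | zero => exact h0
  | succ i ih =>
    intro p q hpq
    exact abs_sub_le_one_of_guarded_increments (ih p q hpq) (hstep i p) (hstep i q)
      (fun h => hguard i p h q hpq) (fun h => hguard i q h p hpq.symm)

theorem stmt7 {V : Type*} [Fintype V] (G : SimpleGraph V)
    (c : ℕ → V → ℤ)
    (hstep : ∀ i (p : V), c (i + 1) p = c i p ∨ c (i + 1) p = c i p + 1)
    (hguard : ∀ i (p : V), c (i + 1) p = c i p + 1 →
      ∀ q : V, G.Adj p q → c i q = c i p ∨ c i q = c i p + 1)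
    (h0 : ∀ p q : V, G.Adj p q → |c 0 p - c 0 q| ≤ 1) :
    ∀ i (p q : V), G.Adj p q → |c i p - c i q| ≤ 1 :=
  stmt7_general G c hstep hguard h0
end

section
/- Consider a unison execution (cⁱ)_{i≥0} on a connected graph G with diameter D. Let p, q be nodes and i < j be indices such that cʲ(p) − cⁱ(p) > 2·d(q,p). Then there exist indices i ≤ i' < j' ≤ j such that c^{i'}(q) ≤ cⁱ(p) + d(q,p) and c^{j'}(q) ≥ cʲ(p) − d(q,p). -/
/-!
By induction on `d(q, p)`. For `q = p` take `i' = i`, `j' = j`. Otherwise choose a neighbour `r`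
of `q` one step closer to `p`; by induction `r` climbs from at most `cⁱ(p) + d(r, p)` to at least
`cʲ(p) - d(r, p)` in between. Look at the first tick `t` and the last tick `s` of `r` in that
window. When `r` ticks, the guard forces `q` to be within one of it, so `q` is at most one above
`r` at time `t` and at least `r`'s value at time `s`; the gap `> 2` keeps `t < s`.
-/

section StepFunction

variable {f : ℕ → ℤ}

lemma monotone_of_succ_eq_or_eq_add_one (hf : ∀ n, f (n + 1) = f n ∨ f (n + 1) = f n + 1) :
    Monotone f :=
  monotone_nat_of_le_succ fun n => by rcases hf n with h | h <;> omega

lemma exists_eq_and_succ_eq_add_one_of_succ_eq_or_eq_add_one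
    (hf : ∀ n, f (n + 1) = f n ∨ f (n + 1) = f n + 1) {a b : ℕ} {m : ℤ} (hab : a ≤ b)
    (ham : f a ≤ m) (hmb : m < f b) :
    ∃ t, a ≤ t ∧ t < b ∧ f t = m ∧ f (t + 1) = m + 1 := by
  induction b, hab using Nat.le_induction with
  | base => omega
  | succ b hab ih =>
    by_cases hm : m < f b
    · obtain ⟨t, hat, htb, hft⟩ := ih hm
      exact ⟨t, hat, by omega, hft⟩
    · refine ⟨b, hab, b.lt_succ_self, ?_⟩
      rcases hf b with h | h <;> omega

end StepFunction

namespace SimpleGraph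

variable {V : Type*} {G : SimpleGraph V}

lemma exists_adj_dist_eq_of_dist_eq_succ {u v : V} {k : ℕ} (h : G.dist u v = k + 1) :
    ∃ w, G.Adj u w ∧ G.dist w v = k := by
  obtain ⟨_ | ⟨hadj, walk⟩, hlen⟩ := exists_walk_of_dist_ne_zero (h.trans_ne k.succ_ne_zero)
  · simp_all
  refine ⟨_, hadj, ?_⟩
  have hle := dist_le walk
  simp only [Walk.length_cons, h, Nat.add_right_cancel_iff] at hlen
  have := hadj.diff_dist_adj (u := v)
  rw [dist_comm, dist_comm (u := v), h] at this
  omega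

end SimpleGraph

section Unison

variable {V : Type*} {G : SimpleGraph V} {c : ℕ → V → ℤ}

lemma exists_times_of_adj
    (hstep : ∀ i (p : V), c (i + 1) p = c i p ∨ c (i + 1) p = c i p + 1)
    (hguard : ∀ i (p : V), c (i + 1) p = c i p + 1 →
      ∀ q : V, G.Adj p q → c i q = c i p ∨ c i q = c i p + 1)
    {q r : V} (hqr : G.Adj q r) {a b : ℕ} (hab : a ≤ b) (hgap : c a r + 2 ≤ c b r) :
    ∃ t s, a ≤ t ∧ t < s ∧ s ≤ b ∧ c t q ≤ c a r + 1 ∧ c b r - 1 ≤ c s q := by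
  obtain ⟨t, hat, htb, hrt, hrt'⟩ := exists_eq_and_succ_eq_add_one_of_succ_eq_or_eq_add_one
    (f := (c · r)) (hstep · r) hab le_rfl (by omega)
  obtain ⟨s, -, hsb, hrs, hrs'⟩ := exists_eq_and_succ_eq_add_one_of_succ_eq_or_eq_add_one
    (f := (c · r)) (hstep · r) hab (by omega : c a r ≤ c b r - 1) (by omega)
  have hts : t < s := by
    by_contra! hst
    have : c s r ≤ c t r := monotone_of_succ_eq_or_eq_add_one (f := (c · r)) (hstep · r) hst
    omega
  have hqt := hguard t r (by omega) q hqr.symm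
  have hqs := hguard s r (by omega) q hqr.symm
  exact ⟨t, s, hat, hts, hsb.le, by omega, by omega⟩

end Unison

theorem stmt9_general {V : Type*} (G : SimpleGraph V) (hG : G.Connected)
    (c : ℕ → V → ℤ)
    (hstep : ∀ i (p : V), c (i + 1) p = c i p ∨ c (i + 1) p = c i p + 1)
    (hguard : ∀ i (p : V), c (i + 1) p = c i p + 1 →
      ∀ q : V, G.Adj p q → c i q = c i p ∨ c i q = c i p + 1)
    (p q : V) (i j : ℕ)
    (hbig : c j p - c i p > 2 * (G.dist q p : ℤ)) :
    ∃ i' j' : ℕ, i ≤ i' ∧ i' < j' ∧ j' ≤ j ∧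
      c i' q ≤ c i p + G.dist q p ∧ c j' q ≥ c j p - G.dist q p := by
  induction hk : G.dist q p generalizing q with
  | zero =>
    obtain rfl : q = p := hG.dist_eq_zero_iff.mp hk
    have hij : i < j := by
      by_contra! hji
      have : c j q ≤ c i q := monotone_of_succ_eq_or_eq_add_one (f := (c · q)) (hstep · q) hji
      omega
    exact ⟨i, j, le_rfl, hij, le_rfl, by omega, by omega⟩
  | succ k ih =>
    push_cast at hbig ⊢
    obtain ⟨r, hqr, hr⟩ := SimpleGraph.exists_adj_dist_eq_of_dist_eq_succ hk
    obtain ⟨i₁, j₁, hi₁, hij₁, hj₁, hri, hrj⟩ := ih r (by omega) hr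
    obtain ⟨t, s, ht, hts, hs, hqt, hqs⟩ :=
      exists_times_of_adj hstep hguard hqr hij₁.le (by omega)
    exact ⟨t, s, by omega, hts, by omega, by omega, by omega⟩

theorem stmt9 {V : Type*} [Fintype V] (G : SimpleGraph V) (hG : G.Connected)
    (c : ℕ → V → ℤ)
    (hstep : ∀ i (p : V), c (i + 1) p = c i p ∨ c (i + 1) p = c i p + 1)
    (hguard : ∀ i (p : V), c (i + 1) p = c i p + 1 →
      ∀ q : V, G.Adj p q → c i q = c i p ∨ c i q = c i p + 1)
    (p q : V) (i j : ℕ) (hij : i < j)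
    (hbig : c j p - c i p > 2 * (G.dist q p : ℤ)) :
    ∃ i' j' : ℕ, i ≤ i' ∧ i' < j' ∧ j' ≤ j ∧
      c i' q ≤ c i p + G.dist q p ∧ c j' q ≥ c j p - G.dist q p :=
  stmt9_general G hG c hstep hguard p q i j hbig
end

section
/- Consider a unison execution (cⁱ)_{0 ≤ i ≤ h} on a connected graph G with diameter D. If some node r satisfies cⁱ(r) = c⁰(r) for every 0 ≤ i ≤ h (r never increments), then for every node p and all indices 0 ≤ i < j ≤ h, cʲ(p) − cⁱ(p) ≤ 2D. -/
/-!
Across an edge `pq`, the clock of `p` advances by at most two more than that of `q`: until `p`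
first increments its advance is zero, the guard at that first increment puts `q` at most one
below `p`'s starting value, and from then on `p` can never get more than one ahead of `q`.
Summing along a shortest path from `p` to the root `r`, whose advance is zero, bounds the advance
of `p` by `2 · dist(p, r) ≤ 2D`.
-/

structure IsUnisonRun {V : Type*} (G : SimpleGraph V) (h : ℕ) (c : ℕ → V → ℤ) : Prop where
  step : ∀ i < h, ∀ p : V, c (i + 1) p = c i p ∨ c (i + 1) p = c i p + 1
  guard : ∀ i < h, ∀ p : V, c (i + 1) p = c i p + 1 →
    ∀ q : V, G.Adj p q → c i q = c i p ∨ c i q = c i p + 1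

namespace IsUnisonRun

variable {V : Type*} {G : SimpleGraph V} {h : ℕ} {c : ℕ → V → ℤ}

theorem clock_le_succ (hc : IsUnisonRun G h c) {k : ℕ} (hk : k < h) (p : V) :
    c k p ≤ c (k + 1) p := by
  rcases hc.step k hk p with e | e <;> omega

theorem clock_mono (hc : IsUnisonRun G h c) (p : V) {i j : ℕ} (hij : i ≤ j) (hj : j ≤ h) :
    c i p ≤ c j p := by
  induction j, hij using Nat.le_induction with
  | base => rfl
  | succ k _ ih => exact (ih (by omega)).trans (hc.clock_le_succ (by omega) p)

/-- The second disjunct is an invariant: the guard makes `c q ≥ c p` whenever `p` increments. -/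
theorem clock_eq_or_within_one_of_adj (hc : IsUnisonRun G h c) {p q : V} (hpq : G.Adj p q)
    {i j : ℕ} (hij : i ≤ j) (hj : j ≤ h) :
    c j p = c i p ∨ (c i q ≤ c i p + 1 ∧ c j p ≤ c j q + 1) := by
  induction j, hij using Nat.le_induction with
  | base => exact Or.inl rfl
  | succ k hik ih =>
    have hk : k < h := by omega
    have hq : c k q ≤ c (k + 1) q := hc.clock_le_succ hk q
    rcases hc.step k hk p with stay | fire
    · rcases ih hk.le with ih | ih <;> omega
    · have hguard := hc.guard k hk p fire q hpq
      have hq_start : c i q ≤ c k q := hc.clock_mono q hik hk.le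
      rcases ih hk.le with ih | ih <;> omega

theorem sub_le_sub_add_two_of_adj (hc : IsUnisonRun G h c) {p q : V} (hpq : G.Adj p q)
    {i j : ℕ} (hij : i ≤ j) (hj : j ≤ h) :
    c j p - c i p ≤ c j q - c i q + 2 := by
  have hq := hc.clock_mono q hij hj
  rcases hc.clock_eq_or_within_one_of_adj hpq hij hj with e | e <;> omega

theorem sub_le_sub_add_two_mul_length (hc : IsUnisonRun G h c) {p q : V} (w : G.Walk p q)
    {i j : ℕ} (hij : i ≤ j) (hj : j ≤ h) :
    c j p - c i p ≤ c j q - c i q + 2 * w.length := by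
  induction w with
  | nil => simp
  | cons hadj _ ih =>
    have := hc.sub_le_sub_add_two_of_adj hadj hij hj
    rw [SimpleGraph.Walk.length_cons]
    push_cast
    linarith

end IsUnisonRun

theorem stmt10 {V : Type*} [Fintype V] (G : SimpleGraph V) (hG : G.Connected)
    (h : ℕ) (c : ℕ → V → ℤ)
    (hstep : ∀ i < h, ∀ p : V, c (i + 1) p = c i p ∨ c (i + 1) p = c i p + 1)
    (hguard : ∀ i < h, ∀ p : V, c (i + 1) p = c i p + 1 →
      ∀ q : V, G.Adj p q → c i q = c i p ∨ c i q = c i p + 1)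
    (r : V) (hr : ∀ i ≤ h, c i r = c 0 r) :
    ∀ (p : V) (i j : ℕ), i < j → j ≤ h → c j p - c i p ≤ 2 * G.diam := by
  intro p i j hij hj
  have hc : IsUnisonRun G h c := ⟨hstep, hguard⟩
  have : Nonempty V := hG.nonempty
  obtain ⟨w, hw⟩ := hG.exists_walk_length_eq_dist p r
  have hdiam : (G.dist p r : ℤ) ≤ G.diam :=
    mod_cast G.dist_le_diam (G.connected_iff_ediam_ne_top.mp hG)
  have hpath := hc.sub_le_sub_add_two_mul_length w hij.le hj
  rw [hr i (by omega), hr j hj, hw] at hpath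
  omega
end

section
/- Consider a unison execution (cⁱ)_{0 ≤ i ≤ h} on a connected graph G with n nodes and diameter D, and suppose some node r satisfies cⁱ(r) = c⁰(r) for all i ≤ h. Then the total number of increments in the execution (pairs (p,i) with c^{i+1}(p) = cⁱ(p) + 1) is at most 2Dn. -/
/-!
The number of increments of a node `p` is `c h p - c 0 p`. For an edge `pq`, the guard at the
first increment of `p` puts `q` at most one ahead of `p`, and the guard at the last increment of
`p` shows that `q` is not behind `p`; hence `p` increments at most twice more than `q`. The root
never increments, so following a shortest path to it, every node increments at most `2D` times.
-/

def UnitSteps (f : ℕ → ℤ) (h : ℕ) : Prop :=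
  ∀ i < h, f (i + 1) = f i ∨ f (i + 1) = f i + 1

namespace UnitSteps

variable {f g : ℕ → ℤ} {h : ℕ}

theorem mono (hf : UnitSteps f h) {i j : ℕ} (hij : i ≤ j) (hj : j ≤ h) : f i ≤ f j := by
  induction j, hij using Nat.le_induction with
  | base => exact le_rfl
  | succ j _ ih => rcases hf j (by omega) with e | e <;> linarith [ih (by omega)]

theorem of_succ (hf : UnitSteps f (h + 1)) : UnitSteps f h :=
  fun i hi => hf i (by omega)

theorem card_filter_incr (hf : UnitSteps f h) :
    ((((Finset.range h).filter fun t => f (t + 1) = f t + 1).card : ℕ) : ℤ) = f h - f 0 := by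
  induction h with
  | zero => simp
  | succ h ih =>
    rw [Finset.range_add_one, Finset.filter_insert]
    rcases hf h (by omega) with e | e
    · rw [if_neg (by omega), ih hf.of_succ, e]
    · rw [if_pos e, Finset.card_insert_of_notMem (by simp), Nat.cast_succ, ih hf.of_succ, e]
      ring

theorem exists_incr_eq (hf : UnitSteps f h) {v : ℤ} (h0 : f 0 ≤ v) (hh : v < f h) :
    ∃ s < h, f s = v ∧ f (s + 1) = v + 1 := by
  induction h with
  | zero => omega
  | succ h ih =>
    by_cases hv : v < f h
    · obtain ⟨s, hs, hsv⟩ := ih hf.of_succ hv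
      exact ⟨s, by omega, hsv⟩
    · exact ⟨h, by omega, by rcases hf h (by omega) with e | e <;> omega⟩

theorem sub_le_sub_add_two (hf : UnitSteps f h) (hg : UnitSteps g h)
    (hguard : ∀ i < h, f (i + 1) = f i + 1 → g i = f i ∨ g i = f i + 1) :
    f h - f 0 ≤ g h - g 0 + 2 := by
  have hg0h := hg.mono (Nat.zero_le h) le_rfl
  rcases (hf.mono (Nat.zero_le h) le_rfl).eq_or_lt with hf0h | hf0h
  · omega
  obtain ⟨s, hs, hsf, hsf₁⟩ := hf.exists_incr_eq le_rfl hf0h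
  obtain ⟨t, ht, htf, htf₁⟩ := hf.exists_incr_eq (v := f h - 1) (by omega) (by omega)
  have hgs : g s ≤ f 0 + 1 := by rcases hguard s hs (by omega) with e | e <;> omega
  have hgt : f h - 1 ≤ g t := by rcases hguard t ht (by omega) with e | e <;> omega
  have := hg.mono (Nat.zero_le s) hs.le
  have := hg.mono ht.le le_rfl
  omega

end UnitSteps

theorem SimpleGraph.Walk.le_add_mul_length {V : Type*} {G : SimpleGraph V} {f : V → ℤ} {k : ℤ}
    (hf : ∀ p q, G.Adj p q → f p ≤ f q + k) {p r : V} (w : G.Walk p r) :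
    f p ≤ f r + k * w.length := by
  induction w with
  | nil => simp
  | cons hpq _ ih =>
    rw [Walk.length_cons]
    push_cast
    linarith [hf _ _ hpq]

theorem stmt11_general {V : Type*} [Fintype V] (G : SimpleGraph V) (hG : G.Connected)
    (h : ℕ) (c : ℕ → V → ℤ)
    (hstep : ∀ i < h, ∀ p : V, c (i + 1) p = c i p ∨ c (i + 1) p = c i p + 1)
    (hguard : ∀ i < h, ∀ p : V, c (i + 1) p = c i p + 1 →
      ∀ q : V, G.Adj p q → c i q = c i p ∨ c i q = c i p + 1)
    (r : V) (hr : ∀ i ≤ h, c i r = c 0 r) :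
    ((Finset.univ ×ˢ Finset.range h).filter
        (fun pi : V × ℕ => c (pi.2 + 1) pi.1 = c pi.2 pi.1 + 1)).card
      ≤ 2 * G.diam * Fintype.card V := by
  have hsteps (p : V) : UnitSteps (c · p) h := fun i hi => hstep i hi p
  have := hG.nonempty
  have hdrift (p : V) : c h p - c 0 p ≤ 2 * G.diam := by
    obtain ⟨w, hw⟩ := hG.exists_walk_length_eq_dist p r
    have hwalk := w.le_add_mul_length (f := fun x => c h x - c 0 x) (k := 2) fun p q hpq =>
      (hsteps p).sub_le_sub_add_two (hsteps q) fun i hi hinc => hguard i hi p hinc q hpq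
    have hdiam := G.dist_le_diam (G.connected_iff_ediam_ne_top.mp hG) (u := p) (v := r)
    have := hr h le_rfl
    omega
  zify
  calc _ = ∑ p, (c h p - c 0 p) := by
        rw [Finset.card_filter, Finset.sum_product, Nat.cast_sum]
        refine Finset.sum_congr rfl fun p _ => ?_
        rw [← Finset.card_filter]
        exact (hsteps p).card_filter_incr
    _ ≤ ∑ _p : V, (2 * G.diam : ℤ) := Finset.sum_le_sum fun p _ => hdrift p
    _ = 2 * G.diam * Fintype.card V := by simp [mul_comm]

theorem stmt11 {V : Type*} [Fintype V] [DecidableEq V] (G : SimpleGraph V) (hG : G.Connected)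
    (h : ℕ) (c : ℕ → V → ℤ)
    (hstep : ∀ i < h, ∀ p : V, c (i + 1) p = c i p ∨ c (i + 1) p = c i p + 1)
    (hguard : ∀ i < h, ∀ p : V, c (i + 1) p = c i p + 1 →
      ∀ q : V, G.Adj p q → c i q = c i p ∨ c i q = c i p + 1)
    (r : V) (hr : ∀ i ≤ h, c i r = c 0 r) :
    ((Finset.univ ×ˢ Finset.range h).filter
        (fun pi : V × ℕ => c (pi.2 + 1) pi.1 = c pi.2 pi.1 + 1)).card
      ≤ 2 * G.diam * Fintype.card V :=
  stmt11_general G hG h c hstep hguard r hr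
end

section
/- Let G be a finite connected graph with diameter D, s ∈ V a distinguished node, and τ : ℕ × V → ℤ a family of 'time' functions satisfying: (1) τ(0, p) ≥ −d(p, s) for all p, and τ(0, s) = 0; (2) τ(j+1, p) ≥ τ(j, p) for all j, p (monotonicity); (3) |τ(j, p) − τ(j, q)| ≤ 1 for every edge {p,q} and every j; (4) for every j and p, if some neighbor q of p satisfies τ(j, q) > τ(j, p), then τ(j+1, p) ≥ τ(j, p) + 1. Then τ(2D, p) ≥ 0 for every node p. -/
/-!
Along any execution, `τ j p ≥ min 0 (j - d(p, s))`. A node that lags behind a neighbour gains a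
unit in the next round; a node that does not is at least as late as a neighbour one step closer
to `s`, which by induction already satisfies the bound with a budget one larger. Since every
distance is at most `D`, all times are nonnegative after `D ≤ 2D` rounds.
-/

namespace SimpleGraph

variable {V : Type*} {G : SimpleGraph V}

lemma Reachable.exists_adj_dist_lt {p s : V} (h : G.Reachable p s) (hps : p ≠ s) :
    ∃ q, G.Adj p q ∧ G.dist q s < G.dist p s := by
  obtain ⟨w, hw⟩ := h.exists_walk_length_eq_dist
  cases w with
  | nil => exact absurd rfl hps
  | cons hadj w' =>
    refine ⟨_, hadj, ?_⟩
    rw [← hw, Walk.length_cons]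
    exact Nat.lt_succ_of_le (G.dist_le w')

lemma Connected.dist_le_diam [Finite V] (hG : G.Connected) (p s : V) : G.dist p s ≤ G.diam :=
  have := hG.nonempty
  G.dist_le_diam (connected_iff_ediam_ne_top.mp hG)

end SimpleGraph

section LazySynchronizer

variable {V : Type*} {G : SimpleGraph V} {s : V} {τ : ℕ → V → ℤ}

lemma min_zero_sub_dist_le_time (hG : G.Connected)
    (h1 : ∀ p : V, τ 0 p ≥ -(G.dist p s : ℤ))
    (h2 : ∀ (j : ℕ) (p : V), τ (j + 1) p ≥ τ j p)
    (h4 : ∀ (j : ℕ) (p : V), (∃ q : V, G.Adj p q ∧ τ j q > τ j p) →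
      τ (j + 1) p ≥ τ j p + 1) :
    ∀ (j : ℕ) (p : V), min 0 ((j : ℤ) - G.dist p s) ≤ τ j p := by
  have hmono (p : V) : Monotone (τ · p) := monotone_nat_of_le_succ (h2 · p)
  intro j
  induction j with
  | zero => intro p; simpa using h1 p
  | succ k ih =>
    intro p
    by_cases hlag : ∃ q, G.Adj p q ∧ τ k q > τ k p
    · have := h4 k p hlag
      have := ih p
      push_cast
      omega
    · push Not at hlag
      by_cases hps : p = s
      · subst hps
        have : 0 ≤ τ (k + 1) p := by simpa using (h1 p).trans (hmono p (Nat.zero_le _))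
        exact min_le_left _ _ |>.trans this
      · obtain ⟨q, hadj, hcloser⟩ := (hG.preconnected p s).exists_adj_dist_lt hps
        have := ih q
        have := hlag q hadj
        have := h2 k p
        push_cast
        omega

end LazySynchronizer

theorem stmt13_general {V : Type*} [Fintype V] (G : SimpleGraph V) (hG : G.Connected)
    (s : V) (τ : ℕ → V → ℤ)
    (h1 : ∀ p : V, τ 0 p ≥ -(G.dist p s : ℤ))
    (h2 : ∀ (j : ℕ) (p : V), τ (j + 1) p ≥ τ j p)
    (h4 : ∀ (j : ℕ) (p : V), (∃ q : V, G.Adj p q ∧ τ j q > τ j p) →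
      τ (j + 1) p ≥ τ j p + 1) :
    ∀ p : V, τ (2 * G.diam) p ≥ 0 := by
  intro p
  have hbound := min_zero_sub_dist_le_time hG h1 h2 h4 (2 * G.diam) p
  have hdist := hG.dist_le_diam p s
  have : min 0 (((2 * G.diam : ℕ) : ℤ) - G.dist p s) = 0 := min_eq_left (by omega)
  omega

theorem stmt13 {V : Type*} [Fintype V] (G : SimpleGraph V) (hG : G.Connected)
    (s : V) (τ : ℕ → V → ℤ)
    (h1 : ∀ p : V, τ 0 p ≥ -(G.dist p s : ℤ)) (h1s : τ 0 s = 0)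
    (h2 : ∀ (j : ℕ) (p : V), τ (j + 1) p ≥ τ j p)
    (h3 : ∀ (j : ℕ) (p q : V), G.Adj p q → |τ j p - τ j q| ≤ 1)
    (h4 : ∀ (j : ℕ) (p : V), (∃ q : V, G.Adj p q ∧ τ j q > τ j p) →
      τ (j + 1) p ≥ τ j p + 1) :
    ∀ p : V, τ (2 * G.diam) p ≥ 0 :=
  stmt13_general G hG s τ h1 h2 h4
end

section
/- Let G be a finite connected graph with diameter D, let T ≥ 1, and let s₁, s₂, …, s_T be nodes with s_{i−1} ∈ N[s_i] (closed neighborhood) for all 1 < i ≤ T; set s_i = s₁ for i < 1. Let τ : ℕ × V → ℤ satisfy: (1) τ(0, p) ≥ 0 for all p; (2) τ(j+1, p) ≥ τ(j, p); (3) |τ(j, p) − τ(j, q)| ≤ 1 for every edge {p,q} and every j; (4) for every j, every 1 ≤ i ≤ T and every node p with τ(j, p) = i − 1: if p = s_i, or if some neighbor q of p has τ(j, q) ≥ i, then τ(j+1, p) ≥ i. Then for all p and all 0 ≤ i ≤ T with 3i − 2 + d(p, s_i) ≤ j, we have τ(j, p) ≥ i. In particular τ(3T + D − 2, p) ≥ T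 for every node p. -/
/-!
Induction on the round `j` with the potential `λ(p, i) = 3i - 2 + d(p, sᵢ)`. If `λ(p, i) ≤ j + 1`,
then `λ(p, i - 1) ≤ j` because consecutive starters are within distance one, so `p` has reached
time `i - 1` by round `j`. If it is exactly at `i - 1`, either `p = sᵢ` or the first step `q` of a
shortest path from `p` to `sᵢ` has `λ(q, i) = λ(p, i) - 1 ≤ j`, hence `τ(j, q) ≥ i`; in both cases
`p` advances to time `i` in round `j + 1`.
-/

namespace SimpleGraph

variable {V : Type*} {G : SimpleGraph V}

theorem dist_le_dist_add_one_of_eq_or_adj {u v w : V} (h : v = w ∨ G.Adj v w) :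
    G.dist u v ≤ G.dist u w + 1 := by
  rcases h with rfl | hadj
  · omega
  · rcases hadj.symm.diff_dist_adj (u := u) with h | h | h <;> omega

theorem Connected.exists_adj_dist_add_one_eq (hG : G.Connected) {u v : V} (huv : u ≠ v) :
    ∃ w, G.Adj u w ∧ G.dist w v + 1 = G.dist u v := by
  obtain ⟨p, hp⟩ := hG.exists_walk_length_eq_dist u v
  cases p with
  | nil => exact absurd rfl huv
  | @cons _ w _ hadj q =>
    refine ⟨w, hadj, le_antisymm ?_ ?_⟩
    · rw [← hp, Walk.length_cons]
      exact Nat.add_le_add_right (dist_le q) 1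
    · calc G.dist u v ≤ G.dist u w + G.dist w v := hG.dist_triangle
        _ = G.dist w v + 1 := by rw [dist_eq_one_iff_adj.mpr hadj, add_comm]

/-- `s 0` stands for the padding `sᵢ = s₁`, `i < 1`. -/
def IsStartingSequence (G : SimpleGraph V) (T : ℕ) (s : ℕ → V) : Prop :=
  ∀ i, 1 ≤ i → i ≤ T → s (i - 1) = s i ∨ G.Adj (s (i - 1)) (s i)

noncomputable def potential (G : SimpleGraph V) (s : ℕ → V) (p : V) (i : ℕ) : ℤ :=
  3 * i - 2 + G.dist p (s i)

theorem IsStartingSequence.potential_pred_add_two_le {T : ℕ} {s : ℕ → V}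
    (hs : G.IsStartingSequence T s) {i : ℕ} (hi : 1 ≤ i) (hiT : i ≤ T) (p : V) :
    G.potential s p (i - 1) + 2 ≤ G.potential s p i := by
  have := dist_le_dist_add_one_of_eq_or_adj (u := p) (hs i hi hiT)
  simp only [potential]
  omega

theorem Connected.potential_adj_add_one_eq (hG : G.Connected) (s : ℕ → V) {p : V} {i : ℕ}
    (hp : p ≠ s i) : ∃ q, G.Adj p q ∧ G.potential s q i + 1 = G.potential s p i := by
  obtain ⟨q, hpq, hq⟩ := hG.exists_adj_dist_add_one_eq hp
  exact ⟨q, hpq, by simp only [potential]; omega⟩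

theorem le_of_potential_le (hG : G.Connected) {T : ℕ} {s : ℕ → V}
    (hs : G.IsStartingSequence T s) {τ : ℕ → V → ℤ}
    (hτ₀ : ∀ p, 0 ≤ τ 0 p) (hmono : ∀ j p, τ j p ≤ τ (j + 1) p)
    (hadv : ∀ (j i : ℕ) (p : V), 1 ≤ i → i ≤ T → τ j p = (i : ℤ) - 1 →
      (p = s i ∨ ∃ q : V, G.Adj p q ∧ τ j q ≥ (i : ℤ)) → τ (j + 1) p ≥ (i : ℤ))
    (j : ℕ) (p : V) {i : ℕ} (hiT : i ≤ T) (hpot : G.potential s p i ≤ j) :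
    (i : ℤ) ≤ τ j p := by
  have hnonneg (j : ℕ) (p : V) : 0 ≤ τ j p :=
    (hτ₀ p).trans (monotone_nat_of_le_succ (hmono · p) (Nat.zero_le j))
  induction j generalizing p i with
  | zero =>
    obtain rfl : i = 0 := by simp only [potential] at hpot; omega
    exact hnonneg 0 p
  | succ j ih =>
    rcases Nat.eq_zero_or_pos i with rfl | hi
    · exact hnonneg _ p
    have hprev : (i : ℤ) - 1 ≤ τ j p := by
      have := ih p (i := i - 1) (by omega)
        (by have := hs.potential_pred_add_two_le hi hiT p; push_cast at hpot; omega)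
      omega
    rcases hprev.lt_or_eq with hlt | heq
    · exact (show (i : ℤ) ≤ τ j p by omega).trans (hmono j p)
    refine hadv j i p hi hiT heq.symm ?_
    by_cases hp : p = s i
    · exact Or.inl hp
    obtain ⟨q, hpq, hq⟩ := hG.potential_adj_add_one_eq s hp
    exact Or.inr ⟨q, hpq, ih q hiT (by push_cast at hpot; omega)⟩

end SimpleGraph

open SimpleGraph in
theorem stmt14_general {V : Type*} [Fintype V] (G : SimpleGraph V) (hG : G.Connected)
    (T : ℕ) (s : ℕ → V)
    (hs0 : ∀ i < 1, s i = s 1)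
    (hseq : ∀ i, 1 < i → i ≤ T → s (i - 1) = s i ∨ G.Adj (s (i - 1)) (s i))
    (τ : ℕ → V → ℤ)
    (h1 : ∀ p : V, τ 0 p ≥ 0)
    (h2 : ∀ (j : ℕ) (p : V), τ (j + 1) p ≥ τ j p)
    (h4 : ∀ (j i : ℕ) (p : V), 1 ≤ i → i ≤ T → τ j p = (i : ℤ) - 1 →
      (p = s i ∨ ∃ q : V, G.Adj p q ∧ τ j q ≥ (i : ℤ)) → τ (j + 1) p ≥ (i : ℤ)) :
    (∀ (p : V) (i j : ℕ), i ≤ T →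
        3 * (i : ℤ) - 2 + (G.dist p (s i) : ℤ) ≤ (j : ℤ) → τ j p ≥ (i : ℤ)) ∧
    (∀ p : V, τ (3 * T + G.diam - 2) p ≥ (T : ℤ)) := by
  have hs : G.IsStartingSequence T s := by
    intro i hi hiT
    rcases hi.eq_or_lt with rfl | hi
    · exact Or.inl (hs0 0 one_pos)
    · exact hseq i hi hiT
  have key := le_of_potential_le hG hs h1 h2 h4
  refine ⟨fun p i j hiT hpot => key j p hiT hpot, fun p => key _ p le_rfl ?_⟩
  have : Nonempty V := hG.nonempty
  have hdiam : G.dist p (s T) ≤ G.diam := G.dist_le_diam (connected_iff_ediam_ne_top.mp hG)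
  simp only [potential]
  omega

theorem stmt14 {V : Type*} [Fintype V] (G : SimpleGraph V) (hG : G.Connected)
    (T : ℕ) (hT : 1 ≤ T) (s : ℕ → V)
    (hs0 : ∀ i < 1, s i = s 1)
    (hseq : ∀ i, 1 < i → i ≤ T → s (i - 1) = s i ∨ G.Adj (s (i - 1)) (s i))
    (τ : ℕ → V → ℤ)
    (h1 : ∀ p : V, τ 0 p ≥ 0)
    (h2 : ∀ (j : ℕ) (p : V), τ (j + 1) p ≥ τ j p)
    (h3 : ∀ (j : ℕ) (p q : V), G.Adj p q → |τ j p - τ j q| ≤ 1)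
    (h4 : ∀ (j i : ℕ) (p : V), 1 ≤ i → i ≤ T → τ j p = (i : ℤ) - 1 →
      (p = s i ∨ ∃ q : V, G.Adj p q ∧ τ j q ≥ (i : ℤ)) → τ (j + 1) p ≥ (i : ℤ)) :
    (∀ (p : V) (i j : ℕ), i ≤ T →
        3 * (i : ℤ) - 2 + (G.dist p (s i) : ℤ) ≤ (j : ℤ) → τ j p ≥ (i : ℤ)) ∧
    (∀ p : V, τ (3 * T + G.diam - 2) p ≥ (T : ℤ)) :=
  stmt14_general G hG T s hs0 hseq τ h1 h2 h4
end
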